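/- Let F = a₀x₀x₃² + a₁x₁x₃² + a₂x₂x₃² + x₃(a₃x₀² + a₆x₁² + a₈x₂²) + x₀³ + x₀x₁x₂ - t x₃³ (homogenization of a cubic with conic-plus-chord top part). If a₆ ≠ 0 and a₈ ≠ 0, then the surface {F = 0} in ℙ³ is smooth at every point of the hyperplane {x₃ = 0}. -/

import Mathlib

/-! On `x₃ = 0` the partials `∂₀F, ∂₂F, ∂₃F` restrict to `3x₀² + x₁x₂`, `x₀x₁` and `f₂`.
Since `x₀(3x₀² + x₁x₂) = 3x₀³ + x₂(x₀x₁)`, the first two vanish only if `x₀ = 0` and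
`x₁x₂ = 0`; then `f₂ = a₆x₁² + a₈x₂²` vanishes only if the other coordinate is zero too. -/

open MvPolynomial

/-- Homogenization of a cubic with conic-plus-chord top part `x₀³ + x₀x₁x₂`. -/
noncomputable def Fcpc (a0 a1 a2 a3 a6 a8 t : ℂ) : MvPolynomial (Fin 4) ℂ :=
  C a0 * X 0 * X 3 ^ 2 + C a1 * X 1 * X 3 ^ 2 + C a2 * X 2 * X 3 ^ 2 +
    X 3 * (C a3 * X 0 ^ 2 + C a6 * X 1 ^ 2 + C a8 * X 2 ^ 2) +
    X 0 ^ 3 + X 0 * X 1 * X 2 - C t * X 3 ^ 3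

section Algebra

variable {R : Type*} [CommRing R] [NoZeroDivisors R]

theorem eq_zero_of_three_mul_sq_add_mul_eq_zero {x y z : R} (h3 : (3 : R) ≠ 0)
    (h : 3 * x ^ 2 + y * z = 0) (hxy : x * y = 0) : x = 0 := by
  have hx3 : 3 * x ^ 3 = 0 := by linear_combination x * h - z * hxy
  exact pow_eq_zero_iff three_ne_zero |>.1 ((mul_eq_zero.1 hx3).resolve_left h3)

theorem eq_zero_of_mul_eq_zero_of_quadratic_eq_zero {a b y z : R} (ha : a ≠ 0) (hb : b ≠ 0)
    (hyz : y * z = 0) (hq : a * y ^ 2 + b * z ^ 2 = 0) : y = 0 ∧ z = 0 := by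
  rcases mul_eq_zero.1 hyz with rfl | rfl <;> simp_all

end Algebra

namespace Fcpc

variable (a0 a1 a2 a3 a6 a8 t : ℂ) {p : Fin 4 → ℂ}

theorem eval_pderiv_zero_at_infinity (hp : p 3 = 0) :
    eval p (pderiv 0 (Fcpc a0 a1 a2 a3 a6 a8 t)) = 3 * p 0 ^ 2 + p 1 * p 2 := by
  simp [Fcpc, hp, pderiv_X]
  ring

theorem eval_pderiv_two_at_infinity (hp : p 3 = 0) :
    eval p (pderiv 2 (Fcpc a0 a1 a2 a3 a6 a8 t)) = p 0 * p 1 := by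
  simp [Fcpc, hp, pderiv_X]

theorem eval_pderiv_three_at_infinity (hp : p 3 = 0) :
    eval p (pderiv 3 (Fcpc a0 a1 a2 a3 a6 a8 t)) =
      a3 * p 0 ^ 2 + a6 * p 1 ^ 2 + a8 * p 2 ^ 2 := by
  simp [Fcpc, hp, pderiv_X]

end Fcpc

/-- If `a₆ ≠ 0` and `a₈ ≠ 0` the surface `{F = 0} ⊂ ℙ³` is smooth at every point of
the hyperplane at infinity `{x₃ = 0}`. -/
theorem conic_plus_chord_smooth_at_infinity (a0 a1 a2 a3 a6 a8 : ℂ)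
    (h6 : a6 ≠ 0) (h8 : a8 ≠ 0) :
    ∀ t : ℂ, ∀ p : Fin 4 → ℂ, p ≠ 0 → p 3 = 0 →
      eval p (Fcpc a0 a1 a2 a3 a6 a8 t) = 0 →
      ∃ i : Fin 4, eval p (pderiv i (Fcpc a0 a1 a2 a3 a6 a8 t)) ≠ 0 := by
  intro t p hp h3 _
  by_contra! hsing
  have d0 := Fcpc.eval_pderiv_zero_at_infinity a0 a1 a2 a3 a6 a8 t h3 ▸ hsing 0
  have d2 := Fcpc.eval_pderiv_two_at_infinity a0 a1 a2 a3 a6 a8 t h3 ▸ hsing 2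
  have d3 := Fcpc.eval_pderiv_three_at_infinity a0 a1 a2 a3 a6 a8 t h3 ▸ hsing 3
  have hx : p 0 = 0 := eq_zero_of_three_mul_sq_add_mul_eq_zero three_ne_zero d0 d2
  rw [hx] at d0 d3
  obtain ⟨hy, hz⟩ := eq_zero_of_mul_eq_zero_of_quadratic_eq_zero (y := p 1) (z := p 2) h6 h8
    (by linear_combination d0) (by linear_combination d3)
  exact hp (funext fun i => by fin_cases i <;> simp [hx, hy, hz, h3])
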